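/- Let C be a regular Mal'tsev category. Consider a commutative cube in C with the following data: morphisms f : X ⟶ Y, g : Z ⟶ Y, h : U ⟶ V, k : W ⟶ V, where g and k are split epimorphisms with given sections g' : Y ⟶ Z and k' : V ⟶ W (so g ∘ g' = id and k ∘ k' = id); morphisms p : X ⟶ U, q : Z ⟶ W, r : Y ⟶ V satisfying h ∘ p = r ∘ f, k ∘ q = r ∘ g and q ∘ g' = k' ∘ r. Form the pullback X ×_Y Z of f and g and the pullback U ×_V W of h and k, and let t : X ×_Y Z ⟶ U ×_V W be the comparison morphism induced by p and q. If p and q are regular epimorphisms, then t is a regular epimorphism. -/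

import Mathlib

/-!
The comparison `t` factors as a base change of the comparison `v = ⟨g, q⟩ : Z ⟶ Y ×_V W`,
followed by an isomorphism and a base change of `p`; since regular epimorphisms are stable under
base change and, in a regular category, under composition, it suffices that `v` is a regular
epimorphism, i.e. an extremal one.

So let `v` factor through a monomorphism `m : I ⟶ Y ×_V W`. In a Mal'tsev category every
relation is difunctional, and `I` is a relation from `Y` to `W` containing every `(g z, q z)`.
For a generalized element `(z, (y, w))` of `Z ×_W (Y ×_V W)`, the pairs `(y, k' r y)`
(from `g' y`), `(g z, k' r g z) = (g z, k' r y)` (from `g' g z`) and `(g z, q z)` lie in `I`,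
hence so does `(y, q z) = (y, w)`. Thus the projection `Z ×_W (Y ×_V W) ⟶ Y ×_V W`, a base change
of `q` and so an extremal epimorphism, factors through `m`, which is therefore an isomorphism.
-/

open CategoryTheory CategoryTheory.Limits

universe v u

variable {C : Type u} [Category.{v} C]

/-- A morphism is a regular epimorphism if it is the coequalizer of some parallel pair. -/
def IsRegularEpi' {X Y : C} (f : X ⟶ Y) : Prop := Nonempty (RegularEpi f)

variable [HasFiniteLimits C]

/-- An internal relation `r : R ⟶ X ⨯ X` is reflexive if the diagonal factors through it. -/
def IsReflexiveRel {R X : C} (r : R ⟶ X ⨯ X) : Prop :=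
  ∃ d : X ⟶ R, d ≫ r = prod.lift (𝟙 X) (𝟙 X)

/-- An internal relation `r : R ⟶ X ⨯ X` is symmetric if its composite with the twist
isomorphism factors through it. -/
def IsSymmetricRel {R X : C} (r : R ⟶ X ⨯ X) : Prop :=
  ∃ s : R ⟶ R, s ≫ r = r ≫ (prod.braiding X X).hom

/-- An internal relation `r : R ⟶ X ⨯ X` is transitive if, with `P` the pullback of the
second component of `r` along the first (with projections `q₁, q₂ : P ⟶ R`), the induced
morphism `⟨r₁ ∘ q₁, r₂ ∘ q₂⟩ : P ⟶ X ⨯ X` factors through `r`. -/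
def IsTransitiveRel {R X : C} (r : R ⟶ X ⨯ X) : Prop :=
  ∃ t : pullback (r ≫ prod.snd) (r ≫ prod.fst) ⟶ R,
    t ≫ r = prod.lift
      (pullback.fst (r ≫ prod.snd) (r ≫ prod.fst) ≫ r ≫ prod.fst)
      (pullback.snd (r ≫ prod.snd) (r ≫ prod.fst) ≫ r ≫ prod.snd)

/-- An internal relation is an equivalence relation if it is reflexive, symmetric
and transitive. -/
def IsEquivalenceRel {R X : C} (r : R ⟶ X ⨯ X) : Prop :=
  IsReflexiveRel r ∧ IsSymmetricRel r ∧ IsTransitiveRel r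

attribute [local simp] prod.lift_fst prod.lift_snd prod.lift_fst_assoc prod.lift_snd_assoc
  pullback.lift_fst pullback.lift_snd pullback.lift_fst_assoc pullback.lift_snd_assoc

theorem regular_of_hasCoequalizer_of_isRegularEpi_pullback_snd
    (hcoeq : ∀ {X Y : C} (f : X ⟶ Y), HasCoequalizer (pullback.fst f f) (pullback.snd f f))
    (hstab : ∀ {X Y Z : C} (f : X ⟶ Y) (g : Z ⟶ Y),
      IsRegularEpi' f → IsRegularEpi' (pullback.snd f g)) :
    Regular C where
  hasCoequalizer_of_isKernelPair {_ _ _ f g₁ g₂} hk :=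
    haveI := hcoeq f
    hasColimit_of_iso (parallelPair.ext hk.isoPullback (Iso.refl _) (by simp) (by simp) :
      parallelPair g₁ g₂ ≅ parallelPair (pullback.fst f f) (pullback.snd f f))
  regularEpiIsStableUnderBaseChange :=
    .of_forall_exists_isPullback fun f g _ hg =>
      ⟨_, _, _, (IsPullback.of_hasPullback g f).flip, ⟨hstab g f hg.regularEpi⟩⟩

def Relates {S A B T : C} (s : S ⟶ A ⨯ B) (a : T ⟶ A) (b : T ⟶ B) : Prop :=
  ∃ σ : T ⟶ S, σ ≫ s = prod.lift a b

theorem IsTransitiveRel.relates_trans {R X T : C} {ρ : R ⟶ X ⨯ X} (hρ : IsTransitiveRel ρ)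
    {x y z : T ⟶ X} (hxy : Relates ρ x y) (hyz : Relates ρ y z) : Relates ρ x z := by
  obtain ⟨t, ht⟩ := hρ
  obtain ⟨σ, hσ⟩ := hxy
  obtain ⟨τ, hτ⟩ := hyz
  refine ⟨pullback.lift σ τ (by simp [reassoc_of% hσ, reassoc_of% hτ]) ≫ t, ?_⟩
  rw [Category.assoc, ht]
  ext <;> simp [reassoc_of% hσ, reassoc_of% hτ]

theorem Relates.difunctional
    (hmal : ∀ (R X : C) (r : R ⟶ X ⨯ X), Mono r → IsReflexiveRel r → IsEquivalenceRel r)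
    {S A B T : C} {s : S ⟶ A ⨯ B} [Mono s] {a a' : T ⟶ A} {b b' : T ⟶ B}
    (hab : Relates s a b) (ha'b : Relates s a' b) (ha'b' : Relates s a' b') :
    Relates s a b' := by
  -- `σ ~ τ` iff `(σ₁, τ₂) ∈ s`: a reflexive relation on `S`, hence a transitive one.
  let ρ := pullback.fst (prod.map (s ≫ prod.fst) (s ≫ prod.snd)) s
  have hρ : ∀ {σ τ : T ⟶ S}, Relates s (σ ≫ s ≫ prod.fst) (τ ≫ s ≫ prod.snd) → Relates ρ σ τ :=
    fun {σ τ} ⟨χ, hχ⟩ => ⟨pullback.lift (prod.lift σ τ) χ (by ext <;> simp [hχ]), by simp [ρ]⟩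
  have hrefl : IsReflexiveRel ρ :=
    ⟨pullback.lift (prod.lift (𝟙 S) (𝟙 S)) (𝟙 S) (by ext <;> simp), by simp [ρ]⟩
  obtain ⟨-, -, htrans⟩ := hmal _ _ ρ inferInstance hrefl
  obtain ⟨σ₁, hσ₁⟩ := hab
  obtain ⟨σ₂, hσ₂⟩ := ha'b
  obtain ⟨σ₃, hσ₃⟩ := ha'b'
  obtain ⟨χ, hχ⟩ := htrans.relates_trans (x := σ₁) (y := σ₂) (z := σ₃)
    (hρ ⟨σ₁, by rw [hσ₁]; ext <;> simp [reassoc_of% hσ₁, reassoc_of% hσ₂]⟩)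
    (hρ ⟨σ₃, by rw [hσ₃]; ext <;> simp [reassoc_of% hσ₂, reassoc_of% hσ₃]⟩)
  refine ⟨χ ≫ pullback.snd _ _, ?_⟩
  rw [Category.assoc, ← pullback.condition, reassoc_of% hχ]
  ext <;> simp [reassoc_of% hσ₁, reassoc_of% hσ₃]

theorem exists_lift_snd_of_fac_pullback_lift
    (hmal : ∀ (R X : C) (r : R ⟶ X ⨯ X), Mono r → IsReflexiveRel r → IsEquivalenceRel r)
    {Y Z V W I : C} {g : Z ⟶ Y} {k : W ⟶ V} {g' : Y ⟶ Z} {k' : V ⟶ W} {q : Z ⟶ W} {r : Y ⟶ V}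
    (hgg' : g' ≫ g = 𝟙 Y) (hkq : q ≫ k = g ≫ r) (hqg' : g' ≫ q = r ≫ k')
    {e : Z ⟶ I} {m : I ⟶ pullback r k} [Mono m] (hem : e ≫ m = pullback.lift g q hkq.symm) :
    ∃ l, l ≫ m = pullback.snd q (pullback.snd r k) := by
  let s := m ≫ prod.lift (pullback.fst r k) (pullback.snd r k)
  have hZ : ∀ {T : C} (x : T ⟶ Z), Relates s (x ≫ g) (x ≫ q) := fun x =>
    ⟨x ≫ e, by ext <;> simp [s, reassoc_of% hem]⟩
  let z := pullback.fst q (pullback.snd r k)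
  let y := pullback.snd q (pullback.snd r k) ≫ pullback.fst r k
  have hzy : z ≫ g ≫ r = y ≫ r := by
    simp only [z, y, Category.assoc, ← hkq, pullback.condition_assoc, pullback.condition]
  have hy : Relates s y (y ≫ r ≫ k') := by
    simpa [hgg', hqg'] using hZ (y ≫ g')
  have hzg : Relates s (z ≫ g) (y ≫ r ≫ k') := by
    simpa [hgg', hqg', reassoc_of% hzy] using hZ (z ≫ g ≫ g')
  obtain ⟨l, hl⟩ := Relates.difunctional hmal hy hzg (hZ z)
  refine ⟨l, pullback.hom_ext ?_ ?_⟩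
  · simpa [s] using hl =≫ prod.fst
  · simpa [s, z, pullback.condition] using hl =≫ prod.snd

theorem extremalEpi_pullback_lift
    (hmal : ∀ (R X : C) (r : R ⟶ X ⨯ X), Mono r → IsReflexiveRel r → IsEquivalenceRel r)
    {Y Z V W : C} {g : Z ⟶ Y} {k : W ⟶ V} {g' : Y ⟶ Z} {k' : V ⟶ W} {q : Z ⟶ W} {r : Y ⟶ V}
    (hgg' : g' ≫ g = 𝟙 Y) (hkq : q ≫ k = g ≫ r) (hqg' : g' ≫ q = r ≫ k')
    [ExtremalEpi (pullback.snd q (pullback.snd r k))] :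
    ExtremalEpi (pullback.lift g q hkq.symm) :=
  .mk_of_hasEqualizers _ fun _ _ m hem _ =>
    have ⟨l, hl⟩ := exists_lift_snd_of_fac_pullback_lift hmal hgg' hkq hqg' hem
    ExtremalEpi.isIso _ l m hl

theorem pullback_map_eq_map_lift_comp_map {X Y Z U V W : C}
    (f : X ⟶ Y) (g : Z ⟶ Y) (h : U ⟶ V) (k : W ⟶ V) (p : X ⟶ U) (q : Z ⟶ W) (r : Y ⟶ V)
    (hhp : p ≫ h = f ≫ r) (hkq : q ≫ k = g ≫ r) :
    pullback.map f g h k p q r hhp.symm hkq.symm =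
      pullback.map f g f (pullback.fst r k) (𝟙 X) (pullback.lift g q hkq.symm) (𝟙 Y)
          (by simp) (by simp) ≫
        (pullbackRightPullbackFstIso r k f).hom ≫
          pullback.map (f ≫ r) k h k p (𝟙 W) (𝟙 V) (by simp [hhp]) (by simp) := by
  ext <;> simp

theorem stmt_7_general
    -- C is a regular category:
    (hcoeq : ∀ {X Y : C} (f : X ⟶ Y),
      HasCoequalizer (pullback.fst f f) (pullback.snd f f))
    (hstab : ∀ {X Y Z : C} (f : X ⟶ Y) (g : Z ⟶ Y),
      IsRegularEpi' f → IsRegularEpi' (pullback.snd f g))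
    -- C is a Mal'tsev category:
    (hmal : ∀ (R X : C) (r : R ⟶ X ⨯ X), Mono r → IsReflexiveRel r → IsEquivalenceRel r)
    -- the data of the cube:
    {X Y Z U V W : C}
    (f : X ⟶ Y) (g : Z ⟶ Y) (h : U ⟶ V) (k : W ⟶ V)
    (g' : Y ⟶ Z) (k' : V ⟶ W)
    (p : X ⟶ U) (q : Z ⟶ W) (r : Y ⟶ V)
    (hgg' : g' ≫ g = 𝟙 Y)
    (hhp : p ≫ h = f ≫ r) (hkq : q ≫ k = g ≫ r) (hqg' : g' ≫ q = r ≫ k')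
    (hp : IsRegularEpi' p) (hq : IsRegularEpi' q) :
    IsRegularEpi' (pullback.map f g h k p q r hhp.symm hkq.symm) := by
  have := regular_of_hasCoequalizer_of_isRegularEpi_pullback_snd hcoeq hstab
  have := Regular.regularEpiIsStableUnderBaseChange (C := C)
  -- regular epimorphisms are strong, strong ones compose, and are regular in a regular category
  have : (MorphismProperty.regularEpi C).IsStableUnderComposition :=
    ⟨fun _ _ (_ : IsRegularEpi _) (_ : IsRegularEpi _) => (inferInstance : IsRegularEpi _)⟩
  have : IsRegularEpi q := ⟨hq⟩
  have hv : IsRegularEpi (pullback.lift g q hkq.symm) :=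
    have := extremalEpi_pullback_lift hmal hgg' hkq hqg'
    inferInstance
  have hbase_v := MorphismProperty.pullbackMap (P := .regularEpi C)
    (MorphismProperty.id_mem _ X) hv (Category.id_comp f).symm (pullback.lift_fst _ _ _).symm
  have hbase_p := MorphismProperty.pullbackMap (P := .regularEpi C)
    ⟨hp⟩ (MorphismProperty.id_mem _ W) hhp.symm (Category.id_comp k).symm
  rw [pullback_map_eq_map_lift_comp_map f g h k p q r hhp hkq]
  exact (MorphismProperty.comp_mem _ _ _ hbase_v <|
    MorphismProperty.comp_mem _ _ _ (MorphismProperty.of_isIso _ _) hbase_p).1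

/-- In a regular Mal'tsev category, given a commutative cube whose left and right faces
are pullbacks of split epimorphisms `g` and `k` (with sections `g'` and `k'`), if the
horizontal comparison maps `p` and `q` are regular epimorphisms then so is the induced
comparison morphism `t : X ×_Y Z ⟶ U ×_V W` between the pullbacks. -/
theorem stmt_7
    -- C is a regular category:
    (hcoeq : ∀ {X Y : C} (f : X ⟶ Y),
      HasCoequalizer (pullback.fst f f) (pullback.snd f f))
    (hstab : ∀ {X Y Z : C} (f : X ⟶ Y) (g : Z ⟶ Y),
      IsRegularEpi' f → IsRegularEpi' (pullback.snd f g))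
    -- C is a Mal'tsev category:
    (hmal : ∀ (R X : C) (r : R ⟶ X ⨯ X), Mono r → IsReflexiveRel r → IsEquivalenceRel r)
    -- the data of the cube:
    {X Y Z U V W : C}
    (f : X ⟶ Y) (g : Z ⟶ Y) (h : U ⟶ V) (k : W ⟶ V)
    (g' : Y ⟶ Z) (k' : V ⟶ W)
    (p : X ⟶ U) (q : Z ⟶ W) (r : Y ⟶ V)
    (hgg' : g' ≫ g = 𝟙 Y) (hkk' : k' ≫ k = 𝟙 V)
    (hhp : p ≫ h = f ≫ r) (hkq : q ≫ k = g ≫ r) (hqg' : g' ≫ q = r ≫ k')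
    (hp : IsRegularEpi' p) (hq : IsRegularEpi' q) :
    IsRegularEpi' (pullback.map f g h k p q r hhp.symm hkq.symm) :=
  stmt_7_general hcoeq hstab hmal f g h k g' k' p q r hgg' hhp hkq hqg' hp hq
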